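/- arXiv:1001.4314 — 3 statements merged into one kernel-verified Lean document; each statement's English description precedes it below -/
import Mathlib

section
/- Let E : A → P be a conditional expectation of finite index and let e ∈ A be a projection with E(e) = (Index E)^{-1}. Define F : P → P by F(x) = (Index E) E(e x e). Then for all x ∈ P, e x e = F(x) e = e F(x); consequently F is a conditional expectation from P onto Q := P ∩ {e}' and e P e = Q e. -/
/-- A finite-index inclusion `P ⊆ A` of unital C*-algebras together with its
C*-basic construction, all realized inside one ambient C*-algebra `B = C*⟨A, e_P⟩`:
`E : A → P` is a conditional expectation of finite Watatani index `ind`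
(a central, positive, invertible element, with inverse `indInv`), `eP` is the Jones
projection (`e_P a e_P = E(a) e_P`, `B` is the linear span of `A e_P A`), and
`Ehat` is the (faithful) dual conditional expectation `Ê : B → A`,
`Ê(x e_P y) = (Index E)⁻¹ x y`. -/
structure WatataniSetup (B : Type*) [NormedRing B] [StarRing B] [CStarRing B]
    [NormedAlgebra ℂ B] [CompleteSpace B] [StarModule ℂ B] [PartialOrder B]
    [StarOrderedRing B] where
  A : StarSubalgebra ℂ B
  P : StarSubalgebra ℂ B
  le : P ≤ A
  E : B → B
  eP : B
  Ehat : B → B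
  ind : B
  indInv : B
  ind_mem : ind ∈ P
  ind_central : ∀ b : B, Commute ind b
  ind_pos : 0 ≤ ind
  ind_mul_inv : ind * indInv = 1
  inv_mul_ind : indInv * ind = 1
  -- `E` is a conditional expectation from `A` onto `P`
  E_add : ∀ x y : B, E (x + y) = E x + E y
  E_smul : ∀ (c : ℂ) (x : B), E (c • x) = c • E x
  E_mem : ∀ x ∈ A, E x ∈ P
  E_fix : ∀ x ∈ P, E x = x
  E_bimod : ∀ p ∈ P, ∀ q ∈ P, ∀ x : B, E (p * x * q) = p * E x * q
  E_star : ∀ x : B, E (star x) = star (E x)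
  E_pos : ∀ x : B, 0 ≤ E (star x * x)
  E_faithful : ∀ x ∈ A, E (star x * x) = 0 → x = 0
  -- the Jones projection
  eP_idem : eP * eP = eP
  eP_star : star eP = eP
  eP_conj : ∀ a ∈ A, eP * a * eP = E a * eP
  eP_comm : ∀ p ∈ P, Commute eP p
  eP_inj : ∀ p ∈ P, p * eP = 0 → p = 0
  -- `B` is the basic construction: the linear span of `A e_P A`
  span : ∀ z : B, ∃ (n : ℕ) (x y : Fin n → B),
    (∀ i, x i ∈ A) ∧ (∀ i, y i ∈ A) ∧ z = ∑ i, x i * eP * y i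
  -- the dual conditional expectation `Ê : B → A`
  Ehat_add : ∀ x y : B, Ehat (x + y) = Ehat x + Ehat y
  Ehat_smul : ∀ (c : ℂ) (x : B), Ehat (c • x) = c • Ehat x
  Ehat_mem : ∀ x : B, Ehat x ∈ A
  Ehat_fix : ∀ x ∈ A, Ehat x = x
  Ehat_bimod : ∀ p ∈ A, ∀ q ∈ A, ∀ x : B, Ehat (p * x * q) = p * Ehat x * q
  Ehat_star : ∀ x : B, Ehat (star x) = star (Ehat x)
  Ehat_pos : ∀ x : B, 0 ≤ Ehat (star x * x)
  Ehat_faithful : ∀ x : B, Ehat (star x * x) = 0 → x = 0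
  Ehat_eP : ∀ x ∈ A, ∀ y ∈ A, Ehat (x * eP * y) = indInv * (x * y)

/-!
Write `f = (Index E) · e e_P e`. Since `e_P e e_P = E(e) e_P = (Index E)⁻¹ e_P`, `f` is a
projection below `e`, and `Ê(f) = e`; so `e - f` is a projection killed by the faithful `Ê`,
whence `e = (Index E) · e e_P e`. For `x ∈ P` the element `a = e x e - F(x) e ∈ A` satisfies
`a e = a` and `e_P a e_P = 0` (both compressions equal `E(e x e) e_P`), hence
`e_P a = (Index E) · e_P a e_P e = 0`, and `a = 0` because `b ↦ b e_P` is injective on `A`.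
Everything else about `F` is then formal.
-/

theorem Commute.mul_nonneg_of_cstarRing {B : Type*} [NormedRing B] [StarRing B] [CStarRing B]
    [NormedAlgebra ℂ B] [CompleteSpace B] [StarModule ℂ B] [PartialOrder B]
    [StarOrderedRing B] {a b : B} (ha : 0 ≤ a) (hb : 0 ≤ b) (h : Commute a b) : 0 ≤ a * b :=
  let _ : CStarAlgebra B := {}
  h.mul_nonneg ha hb

namespace WatataniSetup

variable {B : Type*} [NormedRing B] [StarRing B] [CStarRing B]
    [NormedAlgebra ℂ B] [CompleteSpace B] [StarModule ℂ B] [PartialOrder B]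
    [StarOrderedRing B] (S : WatataniSetup B)

theorem isSelfAdjoint_ind : IsSelfAdjoint S.ind := IsSelfAdjoint.of_nonneg S.ind_pos

theorem indInv_central (b : B) : Commute S.indInv b :=
  (S.ind_central b).units_inv_left (u := ⟨S.ind, S.indInv, S.ind_mul_inv, S.inv_mul_ind⟩)

theorem ind_mul_indInv_mul (b : B) : S.ind * (S.indInv * b) = b := by
  rw [← mul_assoc, S.ind_mul_inv, one_mul]

theorem indInv_mul_ind_mul (b : B) : S.indInv * (S.ind * b) = b := by
  rw [← mul_assoc, S.inv_mul_ind, one_mul]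

theorem isLinearMap_Ehat : IsLinearMap ℂ S.Ehat := ⟨S.Ehat_add, S.Ehat_smul⟩

theorem eq_zero_of_mul_eP_eq_zero {b : B} (hb : b ∈ S.A) (h : b * S.eP = 0) : b = 0 := by
  have h_Ehat : S.indInv * b = 0 := by
    simpa [h, S.isLinearMap_Ehat.map_zero] using (S.Ehat_eP b hb 1 (one_mem _)).symm
  rw [← S.ind_mul_indInv_mul b, h_Ehat, mul_zero]

theorem eq_zero_of_eP_mul_eq_zero {b : B} (hb : b ∈ S.A) (h : S.eP * b = 0) : b = 0 := by
  have h_star : star b * S.eP = 0 := by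
    simpa [S.eP_star] using congrArg star h
  simpa using S.eq_zero_of_mul_eP_eq_zero (star_mem hb) h_star

theorem eq_zero_of_isStarProjection_of_Ehat_eq_zero {p : B} (hp : IsStarProjection p)
    (h : S.Ehat p = 0) : p = 0 := by
  refine S.Ehat_faithful p ?_
  rw [hp.isSelfAdjoint.star_eq, hp.isIdempotentElem.eq, h]

variable {e : B}

theorem eP_mul_mul_eP (he : e ∈ S.A) (hEe : S.E e = S.indInv) :
    S.eP * e * S.eP = S.indInv * S.eP := by
  rw [S.eP_conj e he, hEe]

theorem mul_eP_mul_mul_self (he : e ∈ S.A) (he_idem : IsIdempotentElem e)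
    (hEe : S.E e = S.indInv) :
    e * S.eP * e * (e * S.eP * e) = S.indInv * (e * S.eP * e) := by
  calc e * S.eP * e * (e * S.eP * e) = e * (S.eP * (e * e) * S.eP) * e := by
        simp only [mul_assoc]
    _ = e * (S.indInv * S.eP) * e := by rw [he_idem.eq, S.eP_mul_mul_eP he hEe]
    _ = S.indInv * (e * S.eP * e) := by
        rw [← (S.indInv_central e).left_comm]; simp only [mul_assoc]

theorem isStarProjection_ind_mul_mul_eP_mul (he : e ∈ S.A) (hproj : IsStarProjection e)
    (hEe : S.E e = S.indInv) : IsStarProjection (S.ind * (e * S.eP * e)) := by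
  refine ⟨?_, ?_⟩
  · rw [IsIdempotentElem, mul_assoc, ← (S.ind_central (e * S.eP * e)).left_comm,
      S.mul_eP_mul_mul_self he hproj.isIdempotentElem hEe, S.ind_mul_indInv_mul]
  · rw [IsSelfAdjoint, star_mul, S.isSelfAdjoint_ind.star_eq, ← (S.ind_central _).eq]
    simp only [star_mul, hproj.isSelfAdjoint.star_eq, S.eP_star, mul_assoc]

theorem ind_mul_mul_eP_mul (he : e ∈ S.A) (hproj : IsStarProjection e)
    (hEe : S.E e = S.indInv) : S.ind * (e * S.eP * e) = e := by
  have hf := S.isStarProjection_ind_mul_mul_eP_mul he hproj hEe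
  have hfe : S.ind * (e * S.eP * e) * e = S.ind * (e * S.eP * e) := by
    rw [mul_assoc, mul_assoc (e * S.eP), hproj.isIdempotentElem.eq]
  have hEhat_f : S.Ehat (S.ind * (e * S.eP * e)) = e := by
    have h := S.Ehat_eP (S.ind * e) (mul_mem (S.le S.ind_mem) he) e he
    rw [mul_assoc S.ind e e, hproj.isIdempotentElem.eq, S.indInv_mul_ind_mul] at h
    simpa only [mul_assoc] using h
  have hdiff : e - S.ind * (e * S.eP * e) = 0 :=
    S.eq_zero_of_isStarProjection_of_Ehat_eq_zero (hf.sub_of_mul_eq_left hproj hfe) <| by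
      rw [S.isLinearMap_Ehat.map_sub, hEhat_f, S.Ehat_fix e he, sub_self]
  exact (sub_eq_zero.mp hdiff).symm

theorem eq_zero_of_mul_eq_self_of_eP_mul_mul_eP_eq_zero (he : e ∈ S.A)
    (hproj : IsStarProjection e) (hEe : S.E e = S.indInv) {a : B} (ha : a ∈ S.A)
    (hae : a * e = a) (h : S.eP * a * S.eP = 0) : a = 0 := by
  refine S.eq_zero_of_eP_mul_eq_zero ha ?_
  calc S.eP * a = S.eP * (a * e) := by rw [hae]
    _ = S.eP * (a * (S.ind * (e * S.eP * e))) := by rw [S.ind_mul_mul_eP_mul he hproj hEe]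
    _ = S.ind * (S.eP * (a * e) * S.eP * e) := by
        rw [← (S.ind_central a).left_comm, ← (S.ind_central S.eP).left_comm]
        simp only [mul_assoc]
    _ = S.ind * (S.eP * a * S.eP * e) := by rw [hae]
    _ = 0 := by rw [h, zero_mul, mul_zero]

variable (e) in
/-- The map `F` of the paper, the conditional expectation of `P` onto `P ∩ {e}'`. -/
def tunnelExpectation (x : B) : B := S.ind * S.E (e * x * e)

theorem tunnelExpectation_mem (he : e ∈ S.A) {x : B} (hx : x ∈ S.A) :
    S.tunnelExpectation e x ∈ S.P :=
  mul_mem S.ind_mem (S.E_mem _ (mul_mem (mul_mem he hx) he))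

theorem eP_mul_tunnelExpectation_mul_eP (he : e ∈ S.A) (hEe : S.E e = S.indInv) {x : B}
    (hx : x ∈ S.A) :
    S.eP * (S.tunnelExpectation e x * e) * S.eP = S.E (e * x * e) * S.eP := by
  calc S.eP * (S.tunnelExpectation e x * e) * S.eP
      = S.tunnelExpectation e x * (S.eP * e * S.eP) := by
        rw [← mul_assoc, (S.eP_comm _ (S.tunnelExpectation_mem he hx)).eq]
        simp only [mul_assoc]
    _ = S.E (e * x * e) * S.eP := by
        rw [S.eP_mul_mul_eP he hEe, tunnelExpectation, mul_assoc,
          ← (S.indInv_central (S.E (e * x * e))).left_comm, S.ind_mul_indInv_mul]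

theorem mul_mul_eq_tunnelExpectation_mul (he : e ∈ S.A) (hproj : IsStarProjection e)
    (hEe : S.E e = S.indInv) {x : B} (hx : x ∈ S.A) :
    e * x * e = S.tunnelExpectation e x * e := by
  have hexe : e * x * e ∈ S.A := mul_mem (mul_mem he hx) he
  refine sub_eq_zero.mp <| S.eq_zero_of_mul_eq_self_of_eP_mul_mul_eP_eq_zero he hproj hEe
    (sub_mem hexe (mul_mem (S.le (S.tunnelExpectation_mem he hx)) he)) ?_ ?_
  · simp only [sub_mul, mul_assoc, hproj.isIdempotentElem.eq]
  · rw [mul_sub, sub_mul, S.eP_conj _ hexe, S.eP_mul_tunnelExpectation_mul_eP he hEe hx,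
      sub_self]

theorem star_tunnelExpectation (he : IsSelfAdjoint e) (x : B) :
    star (S.tunnelExpectation e x) = S.tunnelExpectation e (star x) := by
  rw [tunnelExpectation, tunnelExpectation, star_mul, S.isSelfAdjoint_ind.star_eq,
    ← (S.ind_central _).eq, ← S.E_star]
  simp only [star_mul, he.star_eq, mul_assoc]

theorem mul_mul_eq_mul_tunnelExpectation (he : e ∈ S.A) (hproj : IsStarProjection e)
    (hEe : S.E e = S.indInv) {x : B} (hx : x ∈ S.A) :
    e * x * e = e * S.tunnelExpectation e x := by
  have h := congrArg star (S.mul_mul_eq_tunnelExpectation_mul he hproj hEe (star_mem hx))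
  simpa only [star_mul, star_star, hproj.isSelfAdjoint.star_eq, ← S.star_tunnelExpectation hproj.isSelfAdjoint,
    mul_assoc] using h

theorem tunnelExpectation_of_commute (he : IsIdempotentElem e) (hEe : S.E e = S.indInv)
    {x : B} (hx : x ∈ S.P) (hxe : Commute x e) : S.tunnelExpectation e x = x := by
  have h := S.E_bimod x hx 1 (one_mem _) e
  rw [mul_one, mul_one, hEe] at h
  rw [tunnelExpectation, ← hxe.eq, mul_assoc, he.eq, h,
    ← (S.indInv_central x).eq, S.ind_mul_indInv_mul]

theorem tunnelExpectation_add (x y : B) :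
    S.tunnelExpectation e (x + y) = S.tunnelExpectation e x + S.tunnelExpectation e y := by
  simp only [tunnelExpectation, mul_add, add_mul, S.E_add]

theorem tunnelExpectation_smul (c : ℂ) (x : B) :
    S.tunnelExpectation e (c • x) = c • S.tunnelExpectation e x := by
  simp only [tunnelExpectation, mul_smul_comm, smul_mul_assoc, S.E_smul]

theorem tunnelExpectation_mul_mul {p q : B} (hp : p ∈ S.P) (hpe : Commute p e)
    (hq : q ∈ S.P) (hqe : Commute q e) (x : B) :
    S.tunnelExpectation e (p * x * q) = p * S.tunnelExpectation e x * q := by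
  have h : e * (p * x * q) * e = p * (e * x * e) * q := by
    simp only [← mul_assoc, ← hpe.eq]; simp only [mul_assoc, hqe.eq]
  rw [tunnelExpectation, tunnelExpectation, h, S.E_bimod p hp q hq]
  simp only [mul_assoc, (S.ind_central p).left_comm]

theorem tunnelExpectation_star_mul_self_nonneg (he : IsSelfAdjoint e) (x : B) :
    0 ≤ S.tunnelExpectation e (star x * x) := by
  have h : e * (star x * x) * e = star (x * e) * (x * e) := by
    simp only [star_mul, he.star_eq, mul_assoc]
  rw [tunnelExpectation, h]
  exact (S.ind_central _).mul_nonneg_of_cstarRing S.ind_pos (S.E_pos _)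

end WatataniSetup

/-- if `e ∈ A` is a projection with `E(e) = (Index E)⁻¹` and
`F : P → P` is defined by `F(x) = (Index E) E(e x e)`, then `e x e = F(x) e = e F(x)`
for all `x ∈ P`; consequently `F` is a conditional expectation from `P` onto
`Q = P ∩ {e}'` and `e P e = Q e`. -/
theorem tunnel_conditional_expectation {B : Type*} [NormedRing B] [StarRing B] [CStarRing B]
    [NormedAlgebra ℂ B] [CompleteSpace B] [StarModule ℂ B] [PartialOrder B]
    [StarOrderedRing B] (S : WatataniSetup B)
    (e : B) (he : e ∈ S.A) (he_idem : e * e = e) (he_star : star e = e)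
    (hEe : S.E e = S.indInv)
    (F : B → B) (hF : ∀ x : B, F x = S.ind * S.E (e * x * e)) :
    (∀ x ∈ S.P, e * x * e = F x * e ∧ e * x * e = e * F x) ∧
    -- F is a conditional expectation from P onto Q = P ∩ {e}'
    (∀ x ∈ S.P, F x ∈ S.P ∧ Commute (F x) e) ∧
    (∀ x ∈ S.P, Commute x e → F x = x) ∧
    (∀ x y : B, F (x + y) = F x + F y) ∧ (∀ (c : ℂ) (x : B), F (c • x) = c • F x) ∧
    (∀ p ∈ S.P, Commute p e → ∀ q ∈ S.P, Commute q e → ∀ x ∈ S.P,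
        F (p * x * q) = p * F x * q) ∧
    (∀ x ∈ S.P, star (F x) = F (star x)) ∧ (∀ x ∈ S.P, 0 ≤ F (star x * x)) ∧
    -- e P e = Q e
    (∀ x ∈ S.P, ∃ w ∈ S.P, Commute w e ∧ e * x * e = w * e) ∧
    (∀ w ∈ S.P, Commute w e → ∃ x ∈ S.P, w * e = e * x * e) := by
  obtain rfl : F = S.tunnelExpectation e := funext hF
  have hproj : IsStarProjection e := ⟨he_idem, he_star⟩
  have hright x (hx : x ∈ S.P) := S.mul_mul_eq_tunnelExpectation_mul he hproj hEe (S.le hx)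
  have hleft x (hx : x ∈ S.P) := S.mul_mul_eq_mul_tunnelExpectation he hproj hEe (S.le hx)
  have hcomm x (hx : x ∈ S.P) : Commute (S.tunnelExpectation e x) e :=
    (hright x hx).symm.trans (hleft x hx)
  refine ⟨fun x hx => ⟨hright x hx, hleft x hx⟩,
    fun x hx => ⟨S.tunnelExpectation_mem he (S.le hx), hcomm x hx⟩,
    fun x hx hxe => S.tunnelExpectation_of_commute he_idem hEe hx hxe,
    S.tunnelExpectation_add, S.tunnelExpectation_smul,
    fun p hp hpe q hq hqe x _ => S.tunnelExpectation_mul_mul hp hpe hq hqe x,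
    fun x _ => S.star_tunnelExpectation he_star x,
    fun x _ => S.tunnelExpectation_star_mul_self_nonneg he_star x,
    fun x hx => ⟨_, S.tunnelExpectation_mem he (S.le hx), hcomm x hx, hright x hx⟩,
    fun w hw hwe => ⟨w, hw, ?_⟩⟩
  rw [← hwe.eq, mul_assoc, he_idem]
end

section
/- Let E : A → P be a conditional expectation of finite index on an inclusion of unital C*-algebras, and suppose E has the Rohlin property with Rohlin projection e ∈ A_∞. Then the dual conditional expectation Ê : C*⟨A, e_P⟩ → A is approximately representable with the same projection e; in particular e z e = Ê(z) e for all z in the basic construction. -/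
/-- A sequence `(a n)` in a normed space is bounded. -/
def IsBddSeq {A : Type*} [Norm A] (a : ℕ → A) : Prop := ∃ C : ℝ, ∀ n, ‖a n‖ ≤ C

/-- Data exhibiting the algebra `Ainf` as the quotient `A^∞ = ℓ^∞(ℕ, A)/c₀(A)` of
bounded sequences in `A` modulo null sequences; `q` is the quotient map (its values
on unbounded sequences are irrelevant). -/
structure SeqAlg (A : Type*) [NormedRing A] [StarRing A] [NormedAlgebra ℂ A]
    (Ainf : Type*) [Ring Ainf] [StarRing Ainf] [Algebra ℂ Ainf] where
  q : (ℕ → A) → Ainf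
  surj : ∀ z : Ainf, ∃ a : ℕ → A, IsBddSeq a ∧ q a = z
  q_add : ∀ a b : ℕ → A, IsBddSeq a → IsBddSeq b → q (a + b) = q a + q b
  q_mul : ∀ a b : ℕ → A, IsBddSeq a → IsBddSeq b → q (a * b) = q a * q b
  q_smul : ∀ (c : ℂ) (a : ℕ → A), IsBddSeq a → q (c • a) = c • q a
  q_star : ∀ a : ℕ → A, IsBddSeq a → q (star a) = star (q a)
  q_one : q 1 = 1
  q_eq_zero_iff : ∀ a : ℕ → A, IsBddSeq a →
    (q a = 0 ↔ Filter.Tendsto (fun n => ‖a n‖) Filter.atTop (nhds 0))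

/-- The canonical embedding of `A` into `Ainf` as (classes of) constant sequences. -/
def SeqAlg.incl {A : Type*} [NormedRing A] [StarRing A] [NormedAlgebra ℂ A]
    {Ainf : Type*} [Ring Ainf] [StarRing Ainf] [Algebra ℂ Ainf]
    (S : SeqAlg A Ainf) (x : A) : Ainf := S.q fun _ => x

/-!
Represent the Rohlin projection `e` by a bounded sequence `aₙ` in `A` and put
`pₙ = aₙ - Ind(E) aₙ e_P aₙ`. Expanding with `e_P x e_P = E(x) e_P` gives
`Ê(pₙ pₙ⋆) = aₙaₙ⋆ - aₙaₙ⋆aₙ⋆ - aₙaₙaₙ⋆ + Ind(E) aₙ E(aₙaₙ⋆) aₙ⋆`, whose class in `A^∞` is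
`e - e - e + e = 0` because `e` is a projection with `E^∞(e) = Ind(E)⁻¹`. A quasi-basis
`1 = ∑ xᵢ e_P yᵢ` together with the Cauchy–Schwarz inequality for `Ê` gives
`‖z‖ ≤ K ‖Ê(z z⋆)‖^(1/2)`, so `pₙ → 0`, i.e. `e = Ind(E) e e_P e`. As `A e_P A` spans the basic
construction and `e` commutes with `A`, this yields `e z e = Ê(z) e`.
-/

open Filter Topology

theorem map_nonneg_of_map_star_mul_self_nonneg {R S F : Type*} [NonUnitalSemiring R]
    [PartialOrder R] [StarRing R] [StarOrderedRing R] [AddCommMonoid S] [PartialOrder S]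
    [IsOrderedAddMonoid S] [FunLike F R S] [AddMonoidHomClass F R S] (f : F)
    (hf : ∀ x, 0 ≤ f (star x * x)) {x : R} (hx : 0 ≤ x) : 0 ≤ f x := by
  rw [StarOrderedRing.nonneg_iff] at hx
  induction hx using AddSubmonoid.closure_induction with
  | mem _ h => obtain ⟨s, rfl⟩ := h; exact hf s
  | zero => rw [map_zero]
  | add _ _ _ _ h₁ h₂ => rw [map_add]; exact add_nonneg h₁ h₂

def PositiveLinearMap.ofMapStarMulSelfNonneg {R E₁ E₂ : Type*} [Semiring R] [NonUnitalRing E₁]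
    [PartialOrder E₁] [StarRing E₁] [StarOrderedRing E₁] [AddCommGroup E₂] [PartialOrder E₂]
    [IsOrderedAddMonoid E₂] [Module R E₁] [Module R E₂] (f : E₁ →ₗ[R] E₂)
    (hf : ∀ x, 0 ≤ f (star x * x)) : E₁ →ₚ[R] E₂ :=
  .mk₀ f fun _ => map_nonneg_of_map_star_mul_self_nonneg f hf

section CauchySchwarz

variable {B : Type*} [CStarAlgebra B] [PartialOrder B] [StarOrderedRing B]
  (A : StarSubalgebra ℂ B) (Φ : B →ₚ[ℂ] B)

/-- Cauchy–Schwarz for the `A`-valued inner product `⟨x, y⟩ = Φ (x⋆ y)`; the `+ 1` spares a case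
split on `Φ (v⋆ v) = 0`. -/
theorem PositiveLinearMap.norm_map_star_mul_sq_le (hΦA : ∀ x, Φ x ∈ A)
    (hΦstar : ∀ x, Φ (star x) = star (Φ x))
    (hΦbimod : ∀ a ∈ A, ∀ b ∈ A, ∀ x, Φ (a * x * b) = a * Φ x * b) (u v : B) :
    ‖Φ (star v * u)‖ ^ 2 ≤ (‖Φ (star v * v)‖ + 1) * ‖Φ (star u * u)‖ := by
  set w := Φ (star v * u)
  set D := Φ (star v * v)
  set M := ‖D‖
  set t : ℝ := (M + 1)⁻¹
  set y := t • w
  have hyA : y ∈ A := by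
    simpa only [Complex.coe_smul] using A.smul_mem (hΦA (star v * u)) (t : ℂ)
  have hleft : ∀ a ∈ A, ∀ x, Φ (a * x) = a * Φ x := fun a ha x => by
    simpa using hΦbimod a ha 1 (one_mem _) x
  have hright : ∀ b ∈ A, ∀ x, Φ (x * b) = Φ x * b := fun b hb x => by
    simpa using hΦbimod 1 (one_mem _) b hb x
  have hD : D ≤ algebraMap ℝ B M :=
    IsSelfAdjoint.le_algebraMap_norm_self (.of_nonneg (Φ.map_nonneg (star_mul_self_nonneg v)))
  have hexpand : Φ (star (u - v * y) * (u - v * y)) =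
      Φ (star u * u) - star w * y - star y * w + star y * D * y := by
    have : star (u - v * y) * (u - v * y) =
        star u * u - (star u * v) * y - star y * (star v * u) + star y * (star v * v) * y := by
      simp only [star_sub, star_mul]; noncomm_ring
    have hsw : Φ (star u * v) = star w := by rw [← hΦstar, star_mul, star_star]
    rw [this, map_add, map_sub, map_sub, hright y hyA, hleft _ (star_mem hyA),
      hΦbimod _ (star_mem hyA) _ hyA, hsw]
  have hcoeff : (2 * t - M * t ^ 2) • (star w * w) ≤ Φ (star u * u) := by
    have h := (Φ.map_nonneg (star_mul_self_nonneg (u - v * y))).trans_eq hexpand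
    have := h.trans (add_le_add le_rfl (star_left_conjugate_le_conjugate hD y))
    rw [Algebra.algebraMap_eq_smul_one] at this
    simp only [y, star_smul, star_trivial, smul_mul_assoc, mul_smul_comm, mul_one, smul_smul]
      at this
    rw [← sub_nonneg]
    convert this using 1
    module
  have hM : 0 ≤ M := norm_nonneg D
  have ht : 0 < t := by positivity
  have hα : 1 ≤ (M + 1) * (2 * t - M * t ^ 2) := by
    have : (M + 1) * t = 1 := mul_inv_cancel₀ (by positivity)
    nlinarith
  have hnorm : (2 * t - M * t ^ 2) * ‖w‖ ^ 2 ≤ ‖Φ (star u * u)‖ := by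
    have hα0 : 0 ≤ 2 * t - M * t ^ 2 := by nlinarith
    have := CStarAlgebra.norm_le_norm_of_nonneg_of_le
      (smul_nonneg hα0 (star_mul_self_nonneg w)) hcoeff
    rwa [norm_smul, CStarRing.norm_star_mul_self, Real.norm_of_nonneg hα0, ← sq] at this
  calc ‖w‖ ^ 2 ≤ (M + 1) * (2 * t - M * t ^ 2) * ‖w‖ ^ 2 := le_mul_of_one_le_left (sq_nonneg _) hα
    _ ≤ (M + 1) * ‖Φ (star u * u)‖ := by rw [mul_assoc]; gcongr

end CauchySchwarz

section BoundedSequences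

variable {B : Type*} [NormedRing B]

theorem isBddSeq_const (x : B) : IsBddSeq fun _ : ℕ => x := ⟨‖x‖, fun _ => le_rfl⟩

variable (B) in
def bddSeqSubring : Subring (ℕ → B) where
  carrier := {a | IsBddSeq a}
  mul_mem' := by
    rintro a b ⟨Ca, hCa⟩ ⟨Cb, hCb⟩
    exact ⟨Ca * Cb, fun n => norm_mul_le_of_le (hCa n) (hCb n)⟩
  one_mem' := isBddSeq_const 1
  add_mem' := by
    rintro a b ⟨Ca, hCa⟩ ⟨Cb, hCb⟩
    exact ⟨Ca + Cb, fun n => norm_add_le_of_le (hCa n) (hCb n)⟩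
  zero_mem' := isBddSeq_const 0
  neg_mem' := by
    rintro a ⟨C, hC⟩
    exact ⟨C, fun n => (norm_neg (a n)).trans_le (hC n)⟩

def bddSeqSubring.const : B →+* bddSeqSubring B :=
  (Pi.constRingHom ℕ B).codRestrict _ isBddSeq_const

end BoundedSequences

namespace SeqAlg

variable {B : Type*} [NormedRing B] [StarRing B] [NormedAlgebra ℂ B]
  {Binf : Type*} [Ring Binf] [StarRing Binf] [Algebra ℂ Binf] (T : SeqAlg B Binf)

def toRingHom : bddSeqSubring B →+* Binf where
  toFun a := T.q a
  map_one' := T.q_one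
  map_mul' a b := T.q_mul a b a.2 b.2
  map_zero' := by
    have h := T.q_add 0 0 (zero_mem (bddSeqSubring B)) (zero_mem (bddSeqSubring B))
    rw [add_zero] at h
    exact left_eq_add.mp h
  map_add' a b := T.q_add a b a.2 b.2

def inclRingHom : B →+* Binf := T.toRingHom.comp bddSeqSubring.const

theorem inclRingHom_apply (x : B) : T.inclRingHom x = T.incl x := rfl

end SeqAlg

namespace WatataniSetup

variable {B : Type*} [NormedRing B] [StarRing B] [CStarRing B] [NormedAlgebra ℂ B]
  [CompleteSpace B] [StarModule ℂ B] [PartialOrder B] [StarOrderedRing B] (S : WatataniSetup B)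
  {Binf : Type*} [Ring Binf] [StarRing Binf] [Algebra ℂ Binf] (T : SeqAlg B Binf)

noncomputable abbrev cstarAlgebra : CStarAlgebra B :=
  { ‹NormedRing B›, ‹StarRing B›, ‹CompleteSpace B›, ‹CStarRing B›,
    ‹NormedAlgebra ℂ B›, ‹StarModule ℂ B› with }

attribute [local instance] cstarAlgebra

noncomputable def Eₚ : B →ₚ[ℂ] B :=
  .ofMapStarMulSelfNonneg ⟨⟨S.E, S.E_add⟩, S.E_smul⟩ S.E_pos

noncomputable def Ehatₚ : B →ₚ[ℂ] B :=
  .ofMapStarMulSelfNonneg ⟨⟨S.Ehat, S.Ehat_add⟩, S.Ehat_smul⟩ S.Ehat_pos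

@[simp] theorem coe_Ehatₚ : ⇑S.Ehatₚ = S.Ehat := rfl

theorem indInv_commute (x : B) : Commute S.indInv x :=
  Commute.units_inv_left (u := ⟨S.ind, S.indInv, S.ind_mul_inv, S.inv_mul_ind⟩) (S.ind_central x)

theorem ind_mem_A : S.ind ∈ S.A := S.le S.ind_mem

theorem Ehat_ind_mul_mul_eP_mul {a b : B} (ha : a ∈ S.A) (hb : b ∈ S.A) :
    S.Ehat (S.ind * a * S.eP * b) = a * b := by
  rw [S.Ehat_eP _ (mul_mem S.ind_mem_A ha) _ hb, ← mul_assoc, ← mul_assoc, S.inv_mul_ind,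
    one_mul]

theorem exists_mem_mul_eP_eq (z : B) : ∃ a ∈ S.A, z * S.eP = a * S.eP := by
  obtain ⟨n, x, y, hx, hy, rfl⟩ := S.span z
  refine ⟨∑ i, x i * S.E (y i), sum_mem fun i _ => mul_mem (hx i) (S.le (S.E_mem _ (hy i))), ?_⟩
  simp only [Finset.sum_mul, mul_assoc, ← S.eP_conj _ (hy _)]

theorem ind_mul_Ehat_mul_eP_of_mem {a : B} (ha : a ∈ S.A) : S.ind * S.Ehat (a * S.eP) = a := by
  have h := S.Ehat_eP a ha 1 (one_mem _)
  rw [mul_one, mul_one] at h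
  rw [h, ← mul_assoc, S.ind_mul_inv, one_mul]

theorem ind_mul_Ehat_mul_eP (z : B) : S.ind * S.Ehat (z * S.eP) * S.eP = z * S.eP := by
  obtain ⟨a, ha, hz⟩ := S.exists_mem_mul_eP_eq z
  rw [hz, S.ind_mul_Ehat_mul_eP_of_mem ha]

theorem star_sub_ind_mul (a : B) :
    star (a - S.ind * (a * S.eP * a)) = star a - S.ind * (star a * S.eP * star a) := by
  rw [star_sub, star_mul, (IsSelfAdjoint.of_nonneg S.ind_pos).star_eq, ← (S.ind_central _).eq,
    star_mul, star_mul, S.eP_star, mul_assoc]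

theorem Ehat_sub_ind_mul_mul_sub {a c : B} (ha : a ∈ S.A) (hc : c ∈ S.A) :
    S.Ehat ((a - S.ind * (a * S.eP * a)) * (c - S.ind * (c * S.eP * c))) =
      a * c - a * c * c - a * a * c + S.ind * (a * S.E (a * c) * c) := by
  have hι := S.ind_central
  have hexpand : (a - S.ind * (a * S.eP * a)) * (c - S.ind * (c * S.eP * c)) =
      a * c - S.ind * (a * c) * S.eP * c - S.ind * a * S.eP * (a * c)
        + S.ind * (S.ind * (a * S.E (a * c))) * S.eP * c := by
    have h₁ : a * (S.ind * (c * S.eP * c)) = S.ind * (a * c) * S.eP * c := by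
      rw [← mul_assoc, ← (hι a).eq]; noncomm_ring
    have h₂ : S.ind * (a * S.eP * a) * (S.ind * (c * S.eP * c)) =
        S.ind * (S.ind * (a * S.E (a * c))) * S.eP * c := by
      calc S.ind * (a * S.eP * a) * (S.ind * (c * S.eP * c))
          = S.ind * (S.ind * (a * (S.eP * (a * c) * S.eP) * c)) := by
            rw [mul_assoc S.ind, ← mul_assoc (a * S.eP * a) S.ind, ← (hι _).eq]; noncomm_ring
        _ = S.ind * (S.ind * (a * S.E (a * c))) * S.eP * c := by
            rw [S.eP_conj _ (mul_mem ha hc)]; noncomm_ring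
    rw [mul_sub, sub_mul, sub_mul, h₁, h₂]; noncomm_ring
  have hEac : a * S.E (a * c) ∈ S.A := mul_mem ha (S.le (S.E_mem _ (mul_mem ha hc)))
  rw [hexpand, ← coe_Ehatₚ, map_add, map_sub, map_sub, coe_Ehatₚ, S.Ehat_fix _ (mul_mem ha hc),
    S.Ehat_ind_mul_mul_eP_mul (mul_mem ha hc) hc, S.Ehat_ind_mul_mul_eP_mul ha (mul_mem ha hc),
    S.Ehat_ind_mul_mul_eP_mul (mul_mem S.ind_mem_A hEac) hc]
  noncomm_ring

theorem exists_norm_le_mul_sqrt_norm_Ehat :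
    ∃ K : ℝ, ∀ z : B, ‖z‖ ≤ K * √‖S.Ehat (z * star z)‖ := by
  obtain ⟨m, x, y, hx, -, h1⟩ := S.span 1
  set M : Fin m → ℝ := fun i => ‖S.Ehat (star (x i * S.eP) * (x i * S.eP))‖
  refine ⟨∑ i, ‖S.ind‖ * √(M i + 1) * ‖S.eP‖ * ‖y i‖, fun z => ?_⟩
  have hrec : z = ∑ i, S.ind * S.Ehat (z * (x i * S.eP)) * S.eP * y i := by
    conv_lhs => rw [← mul_one z, h1, Finset.mul_sum]
    refine Finset.sum_congr rfl fun i _ => ?_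
    have h := S.ind_mul_Ehat_mul_eP (z * x i)
    rw [mul_assoc z] at h
    rw [h]; noncomm_ring
  have hcs : ∀ i, ‖S.Ehat (z * (x i * S.eP))‖ ≤ √(M i + 1) * √‖S.Ehat (z * star z)‖ := by
    intro i
    rw [← Real.sqrt_mul (by positivity)]
    apply Real.le_sqrt_of_sq_le
    have h := S.Ehatₚ.norm_map_star_mul_sq_le S.A S.Ehat_mem S.Ehat_star S.Ehat_bimod
      (star z) (x i * S.eP)
    simp only [coe_Ehatₚ, star_star] at h
    rwa [← norm_star, ← S.Ehat_star, star_mul]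
  calc ‖z‖ = ‖∑ i, S.ind * S.Ehat (z * (x i * S.eP)) * S.eP * y i‖ := congrArg norm hrec
    _ ≤ ∑ i, ‖S.ind * S.Ehat (z * (x i * S.eP)) * S.eP * y i‖ := norm_sum_le _ _
    _ ≤ ∑ i, ‖S.ind‖ * (√(M i + 1) * √‖S.Ehat (z * star z)‖) * ‖S.eP‖ * ‖y i‖ :=
        Finset.sum_le_sum fun i _ => norm_mul_le_of_le
          (norm_mul_le_of_le (norm_mul_le_of_le le_rfl (hcs i)) le_rfl) le_rfl
    _ = (∑ i, ‖S.ind‖ * √(M i + 1) * ‖S.eP‖ * ‖y i‖) * √‖S.Ehat (z * star z)‖ := by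
        rw [Finset.sum_mul]; exact Finset.sum_congr rfl fun i _ => by ring

theorem tendsto_norm_of_tendsto_norm_Ehat_mul_star {p : ℕ → B}
    (hp : Tendsto (fun n => ‖S.Ehat (p n * star (p n))‖) atTop (𝓝 0)) :
    Tendsto (fun n => ‖p n‖) atTop (𝓝 0) := by
  obtain ⟨K, hK⟩ := S.exists_norm_le_mul_sqrt_norm_Ehat
  refine squeeze_zero (fun _ => norm_nonneg _) (fun n => hK (p n)) ?_
  simpa using ((Real.continuous_sqrt.tendsto 0).comp hp).const_mul K

theorem isBddSeq_E {a : ℕ → B} (ha : IsBddSeq a) : IsBddSeq fun n => S.E (a n) := by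
  obtain ⟨C, hC⟩ := S.Eₚ.exists_norm_apply_le
  obtain ⟨D, hD⟩ := ha
  exact ⟨C * D, fun n => (hC _).trans (by gcongr; exact hD n)⟩


theorem mul_incl_mul_eq_incl_Ehat_mul {e : Binf} (he_comm : ∀ x ∈ S.A, Commute e (T.incl x))
    (he_eP : e * T.incl S.eP * e = T.incl S.indInv * e) (z : B) :
    e * T.incl z * e = T.incl (S.Ehat z) * e := by
  obtain ⟨m, x, y, hx, hy, rfl⟩ := S.span z
  rw [← coe_Ehatₚ, map_sum]
  simp only [← T.inclRingHom_apply, map_sum, Finset.mul_sum, Finset.sum_mul]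
  refine Finset.sum_congr rfl fun i _ => ?_
  rw [coe_Ehatₚ, S.Ehat_eP _ (hx i) _ (hy i)]
  simp only [map_mul]
  simp only [T.inclRingHom_apply]
  have hx' := (he_comm _ (hx i)).eq
  have hy' := (he_comm _ (hy i)).eq
  have hinv := ((S.indInv_commute (x i)).map T.inclRingHom).eq
  simp only [T.inclRingHom_apply] at hinv
  calc e * (T.incl (x i) * T.incl S.eP * T.incl (y i)) * e
      = (e * T.incl (x i)) * T.incl S.eP * (T.incl (y i) * e) := by noncomm_ring
    _ = T.incl (x i) * (e * T.incl S.eP * e) * T.incl (y i) := by rw [hx', ← hy']; noncomm_ring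
    _ = (T.incl S.indInv * T.incl (x i)) * (e * T.incl (y i)) := by
        rw [he_eP, hinv]; noncomm_ring
    _ = T.incl S.indInv * (T.incl (x i) * T.incl (y i)) * e := by rw [hy']; noncomm_ring

theorem incl_ind_mul_incl_indInv : T.incl S.ind * T.incl S.indInv = 1 := by
  rw [← T.inclRingHom_apply, ← T.inclRingHom_apply, ← map_mul, S.ind_mul_inv, map_one]

theorem incl_indInv_mul_incl_ind : T.incl S.indInv * T.incl S.ind = 1 := by
  rw [← T.inclRingHom_apply, ← T.inclRingHom_apply, ← map_mul, S.inv_mul_ind, map_one]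

theorem mul_incl_eP_mul_eq_of_rohlin (Einf : Binf → Binf)
    (hEinf : ∀ a : ℕ → B, IsBddSeq a → Einf (T.q a) = T.q fun n => S.E (a n))
    {e : Binf} (he_rep : ∃ a : ℕ → B, IsBddSeq a ∧ (∀ n, a n ∈ S.A) ∧ T.q a = e)
    (he_idem : e * e = e) (he_star : star e = e) (he_comm : ∀ x ∈ S.A, Commute e (T.incl x))
    (he_exp : Einf e = T.incl S.indInv) :
    e * T.incl S.eP * e = T.incl S.indInv * e := by
  obtain ⟨a, ha, haA, hae⟩ := he_rep
  let α : bddSeqSubring B := ⟨a, ha⟩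
  let α' : bddSeqSubring B :=
    ⟨star a, ha.imp fun _ hC n => (norm_star (a n)).trans_le (hC n)⟩
  have hα : T.toRingHom α = e := hae
  have hα' : T.toRingHom α' = e := (T.q_star a ha).trans (hae ▸ he_star)
  let ε : bddSeqSubring B := ⟨fun n => S.E (a n * star (a n)), S.isBddSeq_E (α * α').2⟩
  have hε : T.toRingHom ε = T.incl S.indInv := by
    calc T.toRingHom ε = Einf (T.toRingHom (α * α')) := (hEinf _ (α * α').2).symm
      _ = T.incl S.indInv := by rw [map_mul, hα, hα', he_idem, he_exp]
  let ι := bddSeqSubring.const S.ind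
  let p := α - ι * (α * bddSeqSubring.const S.eP * α)
  let r := α * α' - α * α' * α' - α * α * α' + ι * (α * ε * α')
  have hpr : ∀ n, S.Ehat ((p : ℕ → B) n * star ((p : ℕ → B) n)) = (r : ℕ → B) n := fun n => by
    change S.Ehat ((a n - S.ind * (a n * S.eP * a n)) *
      star (a n - S.ind * (a n * S.eP * a n))) = _
    rw [star_sub_ind_mul]
    exact S.Ehat_sub_ind_mul_mul_sub (haA n) (star_mem (haA n))
  have hι : T.toRingHom ι = T.incl S.ind := rfl
  have hr : T.toRingHom r = 0 := by
    simp only [r, map_add, map_sub, map_mul, hα, hα', hε, hι, he_idem]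
    have hcancel : T.incl S.ind * (e * T.incl S.indInv * e) = e := by
      rw [← mul_assoc, ← mul_assoc, ← (he_comm _ S.ind_mem_A).eq, mul_assoc e,
        S.incl_ind_mul_incl_indInv, mul_one, he_idem]
    rw [hcancel]
    abel
  have hp : T.toRingHom p = 0 := by
    refine (T.q_eq_zero_iff _ p.2).mpr (S.tendsto_norm_of_tendsto_norm_Ehat_mul_star ?_)
    simpa only [hpr] using (T.q_eq_zero_iff _ r.2).mp hr
  simp only [p, map_sub, map_mul, hα, hι, sub_eq_zero] at hp
  change e = T.incl S.ind * (e * T.incl S.eP * e) at hp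
  rw [← one_mul (e * _ * e), ← S.incl_indInv_mul_incl_ind T, mul_assoc, ← hp]

end WatataniSetup

/-- if `E : A → P` has the Rohlin property with Rohlin projection
`e ∈ A_∞` (so `E^∞(e) = (Index E)⁻¹·1` and `x ↦ xe` is injective on `A`), then the
dual conditional expectation `Ê : C*⟨A, e_P⟩ → A` is approximately representable with
the same projection `e`: `e z e = Ê(z) e` for every `z` in the basic construction,
and `x ↦ xe` is injective on `A`. -/
theorem rohlin_implies_dual_approximately_representable
    {B : Type*} [NormedRing B] [StarRing B] [CStarRing B] [NormedAlgebra ℂ B]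
    [CompleteSpace B] [StarModule ℂ B] [PartialOrder B] [StarOrderedRing B]
    (S : WatataniSetup B)
    {Binf : Type*} [Ring Binf] [StarRing Binf] [Algebra ℂ Binf] (T : SeqAlg B Binf)
    (Einf : Binf → Binf)
    (hEinf : ∀ a : ℕ → B, IsBddSeq a → Einf (T.q a) = T.q fun n => S.E (a n))
    -- the Rohlin projection `e ∈ A_∞`
    (e : Binf) (he_rep : ∃ a : ℕ → B, IsBddSeq a ∧ (∀ n, a n ∈ S.A) ∧ T.q a = e)
    (he_idem : e * e = e) (he_star : star e = e)
    (he_comm : ∀ x ∈ S.A, Commute e (T.incl x))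
    (he_exp : Einf e = T.incl S.indInv)
    (he_inj : ∀ x ∈ S.A, T.incl x * e = 0 → x = 0) :
    (∀ z : B, e * T.incl z * e = T.incl (S.Ehat z) * e) ∧
      (∀ x ∈ S.A, T.incl x * e = 0 → x = 0) :=
  ⟨S.mul_incl_mul_eq_incl_Ehat_mul T he_comm
    (S.mul_incl_eP_mul_eq_of_rohlin T Einf hEinf he_rep he_idem he_star he_comm he_exp), he_inj⟩
end

section
/- Let E : A → P be an approximately representable conditional expectation of finite index. If P is simple, then the inclusion P ⊆ A is irreducible (P' ∩ A ≅ ℂ) and A is simple. -/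
/-!
A conditional expectation is a positive map, hence continuous, so `P = {x | E x = x}` is a
Banach algebra; for Banach algebras simplicity with respect to closed ideals is the same as
algebraic simplicity, since a proper ideal stays inside the closed set of non-units.

Irreducibility: if `x` commutes with `P`, it commutes with `e = [aₖ]`, so
`x e = e x e = E(x) e`. The quasi-basis makes `y ↦ y e` injective on all of `A`, hence
`x = E(x) ∈ P`, and a central element of a simple complex Banach algebra is a scalar
(`λ - x` is central and not invertible for `λ` in the spectrum).

Simplicity: for a nonzero ideal `I` of `A`, the quasi-basis gives `E(I) ≠ 0`, so the ideal
`E(I)` of `P` contains `1 = E(i)`. Then `aₖ i aₖ ∈ I` is asymptotically `E(i) aₖ = aₖ`, while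
the `aₖ ∈ P` are asymptotically idempotent and do not tend to `0`. McWeeny's iteration moves
them to genuine idempotents of `P`, and an idempotent within distance `1` of `I` lies in `I`.
Hence `I ∩ P ≠ 0`, so `1 ∈ I`.
-/

/-- A conditional expectation from a unital C*-algebra `A` onto a C*-subalgebra `P`. -/
structure IsCondExp {A : Type*} [NormedRing A] [StarRing A] [CStarRing A]
    [NormedAlgebra ℂ A] [CompleteSpace A] [StarModule ℂ A] [PartialOrder A]
    [StarOrderedRing A] (P : StarSubalgebra ℂ A) (E : A → A) : Prop where
  map_add : ∀ x y : A, E (x + y) = E x + E y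
  map_smul : ∀ (c : ℂ) (x : A), E (c • x) = c • E x
  mem : ∀ x : A, E x ∈ P
  fix : ∀ x ∈ P, E x = x
  bimod : ∀ p ∈ P, ∀ q ∈ P, ∀ x : A, E (p * x * q) = p * E x * q
  star_map : ∀ x : A, E (star x) = star (E x)
  pos : ∀ x : A, 0 ≤ E (star x * x)

/-- A quasi-basis `{(u i, v i)}` for a conditional expectation `E`. -/
def IsQuasiBasis {A : Type*} [Ring A] (E : A → A) {n : ℕ} (u v : Fin n → A) : Prop :=
  ∀ a : A, (a = ∑ i, u i * E (v i * a)) ∧ (a = ∑ i, E (a * u i) * v i)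

/-- A C*-algebra is simple if it has no nontrivial closed two-sided ideals. -/
def IsSimpleCStarAlgebra (A : Type*) [NonUnitalNonAssocRing A] [TopologicalSpace A] :
    Prop :=
  ∀ I : TwoSidedIdeal A, IsClosed (I : Set A) → I = ⊥ ∨ I = ⊤

open Filter Topology

section BoundedSequences

lemma IsBddSeq.const {A : Type*} [Norm A] (x : A) : IsBddSeq fun _ : ℕ => x :=
  ⟨‖x‖, fun _ => le_rfl⟩

variable {A : Type*} [SeminormedRing A] {a b : ℕ → A}

lemma IsBddSeq.neg (ha : IsBddSeq a) : IsBddSeq (-a) := by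
  obtain ⟨C, hC⟩ := ha
  exact ⟨C, fun k => (norm_neg (a k)).trans_le (hC k)⟩

lemma IsBddSeq.add (ha : IsBddSeq a) (hb : IsBddSeq b) : IsBddSeq (a + b) := by
  obtain ⟨C, hC⟩ := ha
  obtain ⟨D, hD⟩ := hb
  exact ⟨C + D, fun k => (norm_add_le _ _).trans (add_le_add (hC k) (hD k))⟩

lemma IsBddSeq.sub (ha : IsBddSeq a) (hb : IsBddSeq b) : IsBddSeq (a - b) :=
  sub_eq_add_neg a b ▸ ha.add hb.neg

lemma IsBddSeq.mul (ha : IsBddSeq a) (hb : IsBddSeq b) : IsBddSeq (a * b) := by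
  obtain ⟨C, hC⟩ := ha
  obtain ⟨D, hD⟩ := hb
  refine ⟨C * D, fun k => (norm_mul_le _ _).trans ?_⟩
  exact mul_le_mul (hC k) (hD k) (norm_nonneg _) ((norm_nonneg _).trans (hC k))

end BoundedSequences

namespace SeqAlg

variable {A : Type*} [NormedRing A] [StarRing A] [NormedAlgebra ℂ A]
  {Ainf : Type*} [Ring Ainf] [StarRing Ainf] [Algebra ℂ Ainf] (S : SeqAlg A Ainf)
  {a b : ℕ → A}

lemma q_neg (hb : IsBddSeq b) : S.q (-b) = -S.q b := by
  simpa only [neg_one_smul] using S.q_smul (-1) b hb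

lemma q_sub (ha : IsBddSeq a) (hb : IsBddSeq b) : S.q (a - b) = S.q a - S.q b := by
  rw [sub_eq_add_neg, S.q_add _ _ ha hb.neg, S.q_neg hb, sub_eq_add_neg]

lemma tendsto_norm_sub_of_q_eq (ha : IsBddSeq a) (hb : IsBddSeq b) (h : S.q a = S.q b) :
    Tendsto (fun k => ‖a k - b k‖) atTop (𝓝 0) :=
  (S.q_eq_zero_iff _ (ha.sub hb)).mp (by rw [S.q_sub ha hb, h, sub_self])

lemma q_mul' (ha : IsBddSeq a) (hb : IsBddSeq b) : (S.q fun k => a k * b k) = S.q a * S.q b :=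
  S.q_mul a b ha hb

lemma incl_mul (x y : A) : S.incl (x * y) = S.incl x * S.incl y :=
  S.q_mul _ _ (.const x) (.const y)

lemma incl_sub (x y : A) : S.incl (x - y) = S.incl x - S.incl y :=
  S.q_sub (.const x) (.const y)

lemma incl_mul_q (x : A) (ha : IsBddSeq a) : S.incl x * S.q a = S.q fun k => x * a k :=
  (S.q_mul _ _ (.const x) ha).symm

lemma q_mul_incl (ha : IsBddSeq a) (x : A) : S.q a * S.incl x = S.q fun k => a k * x :=
  (S.q_mul _ _ ha (.const x)).symm

end SeqAlg

namespace TwoSidedIdeal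

variable {R : Type*} [Ring R] [TopologicalSpace R] [IsTopologicalRing R]

def topologicalClosure (I : TwoSidedIdeal R) : TwoSidedIdeal R :=
  .mk' (closure I) (subset_closure I.zero_mem)
    (fun hx hy => map_mem_closure₂ continuous_add hx hy fun _ hx _ hy => I.add_mem hx hy)
    (fun hx => map_mem_closure continuous_neg hx fun _ hx => I.neg_mem hx)
    (fun hy => map_mem_closure (continuous_const_mul _) hy fun _ hy => I.mul_mem_left _ _ hy)
    (fun {_ y} hx => map_mem_closure (f := (· * y)) (continuous_mul_const y) hx
      fun _ hx => I.mul_mem_right _ _ hx)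

lemma coe_topologicalClosure (I : TwoSidedIdeal R) :
    (I.topologicalClosure : Set R) = closure I := by
  rw [topologicalClosure, coe_mk']

end TwoSidedIdeal

lemma TwoSidedIdeal.eq_top_of_isUnit_mem {R : Type*} [Ring R] (I : TwoSidedIdeal R) {x : R}
    (hxI : x ∈ I) (hx : IsUnit x) : I = ⊤ := by
  obtain ⟨u, rfl⟩ := hx
  exact I.one_mem_iff.mp (by simpa using I.mul_mem_left (↑u⁻¹) _ hxI)

theorem isSimpleCStarAlgebra_iff_isSimpleRing {B : Type*} [NormedRing B] [CompleteSpace B]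
    [Nontrivial B] : IsSimpleCStarAlgebra B ↔ IsSimpleRing B := by
  refine ⟨fun h => .of_eq_bot_or_eq_top fun I => ?_, fun _ I _ => eq_bot_or_eq_top I⟩
  refine or_iff_not_imp_right.mpr fun hI => ?_
  have hI_nonunits : (I : Set B) ⊆ nonunits B := fun x hxI hx => hI (I.eq_top_of_isUnit_mem hxI hx)
  rcases h I.topologicalClosure (by simp only [I.coe_topologicalClosure, isClosed_closure])
    with hbot | htop
  · refine eq_bot_iff.mpr fun x hx => hbot ▸ ?_
    rw [← SetLike.mem_coe, I.coe_topologicalClosure]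
    exact subset_closure hx
  · have h1 : (1 : B) ∈ closure (I : Set B) := by
      rw [← I.coe_topologicalClosure, htop]
      trivial
    exact absurd (closure_minimal hI_nonunits nonunits.isClosed h1) one_notMem_nonunits

theorem IsSimpleRing.exists_eq_smul_one_of_forall_commute {B : Type*} [NormedRing B]
    [NormedAlgebra ℂ B] [CompleteSpace B] [IsSimpleRing B] {x : B} (hx : ∀ y, Commute x y) :
    ∃ c : ℂ, x = c • 1 := by
  obtain ⟨c, hc⟩ := spectrum.nonempty x
  refine ⟨c, ?_⟩
  set z := algebraMap ℂ B c - x with hz_def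
  have hz : z ∈ Subring.center B := Subring.mem_center_iff.mpr fun y => by
    simp only [hz_def, mul_sub, sub_mul, Algebra.commutes, (hx y).eq]
  by_contra hne
  have hz0 : (⟨z, hz⟩ : Subring.center B) ≠ 0 := fun h0 => hne <| by
    rw [← Algebra.algebraMap_eq_smul_one, eq_comm, ← sub_eq_zero]
    exact congrArg Subtype.val h0
  obtain ⟨w, hw⟩ := (IsSimpleRing.isField_center B).mul_inv_cancel hz0
  have hzw : z * w = 1 := congrArg Subtype.val hw
  have hwz : w * z = 1 := by rw [Subring.mem_center_iff.mp hz w, hzw]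
  exact spectrum.mem_iff.mp hc ⟨⟨z, w, hzw, hwz⟩, rfl⟩

theorem IsIdempotentElem.mem_of_norm_sub_lt_one {R : Type*} [NormedRing R] [CompleteSpace R]
    {I : TwoSidedIdeal R} {r j : R} (hr : IsIdempotentElem r) (hj : j ∈ I) (h : ‖r - j‖ < 1) :
    r ∈ I := by
  -- `r * (1 - (r - j)) = r * j`, and `1 - (r - j)` is invertible.
  obtain ⟨u, hu⟩ := isUnit_one_sub_of_norm_lt_one h
  have hrj : r * u = r * j := by rw [hu, mul_sub, mul_one, mul_sub, hr.eq, sub_sub_cancel]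
  have hru : r * u ∈ I := hrj ▸ I.mul_mem_left r j hj
  simpa only [Units.mul_inv_cancel_right] using I.mul_mem_right _ (↑u⁻¹) hru

section McWeeny

variable {B : Type*} [NormedRing B]

/-- McWeeny's purification map `y ↦ 3y² - 2y³`: it fixes idempotents and, by
`mcWeeny_mul_self_sub`, squares the defect `y * y - y`. -/
def mcWeeny (y : B) : B := 3 * y ^ 2 - 2 * y ^ 3

lemma mcWeeny_sub (y : B) : mcWeeny y - y = -((2 * y - 1) * (y * y - y)) := by
  unfold mcWeeny
  noncomm_ring

lemma mcWeeny_mul_self_sub (y : B) :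
    mcWeeny y * mcWeeny y - mcWeeny y = ((2 * y - 1) ^ 2 - 4) * (y * y - y) ^ 2 := by
  unfold mcWeeny
  noncomm_ring

variable [NormOneClass B]

lemma norm_two_mul_sub_one_le (y : B) : ‖2 * y - 1‖ ≤ 2 * ‖y‖ + 1 := by
  calc ‖2 * y - 1‖ ≤ ‖y + y‖ + ‖(1 : B)‖ := by rw [two_mul]; exact norm_sub_le _ _
    _ ≤ 2 * ‖y‖ + 1 := by linarith [norm_add_le y y, norm_one (α := B)]

lemma norm_mcWeeny_sub_le (y : B) : ‖mcWeeny y - y‖ ≤ (2 * ‖y‖ + 1) * ‖y * y - y‖ := by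
  rw [mcWeeny_sub, norm_neg]
  exact (norm_mul_le _ _).trans
    (mul_le_mul_of_nonneg_right (norm_two_mul_sub_one_le y) (norm_nonneg _))

lemma norm_mcWeeny_mul_self_sub_le (y : B) :
    ‖mcWeeny y * mcWeeny y - mcWeeny y‖ ≤ ((2 * ‖y‖ + 1) ^ 2 + 4) * ‖y * y - y‖ ^ 2 := by
  have h4 : ‖(4 : B)‖ ≤ 4 := by simpa using Nat.norm_cast_le (α := B) 4
  have hs : ‖(2 * y - 1) ^ 2 - 4‖ ≤ (2 * ‖y‖ + 1) ^ 2 + 4 :=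
    calc ‖(2 * y - 1) ^ 2 - 4‖ ≤ ‖2 * y - 1‖ ^ 2 + ‖(4 : B)‖ :=
          (norm_sub_le _ _).trans (add_le_add_left (norm_pow_le _ 2) _)
      _ ≤ (2 * ‖y‖ + 1) ^ 2 + 4 := by
          gcongr
          exact norm_two_mul_sub_one_le y
  rw [mcWeeny_mul_self_sub]
  exact (norm_mul_le _ _).trans
    (mul_le_mul hs (norm_pow_le _ 2) (norm_nonneg _) (by positivity))

-- `2M + 3` bounds `2‖y‖ + 1` while `y` stays within `1` of the ball of radius `M`.
lemma mcWeeny_step {b y : B} {M ε t : ℝ} (hb : ‖b‖ ≤ M) (hε₀ : 0 ≤ ε)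
    (hε : 2 * ((2 * M + 3) ^ 2 + 4) * ε ≤ 1) (ht₀ : 0 ≤ t) (ht₁ : t ≤ 1)
    (hyb : ‖y - b‖ ≤ 2 * (2 * M + 3) * ε * (1 - t)) (hy : ‖y * y - y‖ ≤ ε * t) :
    ‖mcWeeny y - y‖ ≤ (2 * M + 3) * (ε * t) ∧
      ‖mcWeeny y * mcWeeny y - mcWeeny y‖ ≤ ε * (t / 2) := by
  have hM : 0 ≤ M := (norm_nonneg b).trans hb
  have hy_norm : ‖y‖ ≤ M + 1 := by
    have hyb' : ‖y‖ ≤ ‖y - b‖ + ‖b‖ := norm_le_norm_sub_add y b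
    nlinarith [mul_nonneg hε₀ ht₀]
  have hs : 2 * ‖y‖ + 1 ≤ 2 * M + 3 := by linarith
  have hd := norm_nonneg (y * y - y)
  constructor
  · exact (norm_mcWeeny_sub_le y).trans (mul_le_mul hs hy hd (by linarith))
  · refine (norm_mcWeeny_mul_self_sub_le y).trans ?_
    have hy2 : ‖y * y - y‖ ^ 2 ≤ ε * (ε * t) := by
      rw [sq]
      exact mul_le_mul (hy.trans (mul_le_of_le_one_right hε₀ ht₁)) hy hd hε₀
    calc ((2 * ‖y‖ + 1) ^ 2 + 4) * ‖y * y - y‖ ^ 2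
        ≤ ((2 * M + 3) ^ 2 + 4) * (ε * (ε * t)) := by gcongr
      _ = (((2 * M + 3) ^ 2 + 4) * ε) * (ε * t) := by ring
      _ ≤ 1 / 2 * (ε * t) := by gcongr; linarith
      _ = ε * (t / 2) := by ring

end McWeeny

section McWeenyIteration

variable {B : Type*} [NormedRing B] [NormOneClass B] {b : B} {M : ℝ}

lemma mcWeeny_iterate_le (hb : ‖b‖ ≤ M) (hε : 2 * ((2 * M + 3) ^ 2 + 4) * ‖b * b - b‖ ≤ 1)
    (k : ℕ) :
    ‖mcWeeny^[k] b - b‖ ≤ 2 * (2 * M + 3) * ‖b * b - b‖ * (1 - (1 / 2) ^ k) ∧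
      ‖mcWeeny^[k] b * mcWeeny^[k] b - mcWeeny^[k] b‖ ≤ ‖b * b - b‖ * (1 / 2) ^ k := by
  induction k with
  | zero => simp
  | succ k ih =>
    have hq₀ : (0 : ℝ) ≤ (1 / 2) ^ k := by positivity
    have hq₁ : ((1 : ℝ) / 2) ^ k ≤ 1 := pow_le_one₀ (by norm_num) (by norm_num)
    obtain ⟨hmove, hdefect⟩ :=
      mcWeeny_step hb (norm_nonneg _) hε hq₀ hq₁ ih.1 ih.2
    rw [Function.iterate_succ_apply', pow_succ]
    refine ⟨?_, by linarith⟩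
    calc ‖mcWeeny (mcWeeny^[k] b) - b‖
        ≤ ‖mcWeeny (mcWeeny^[k] b) - mcWeeny^[k] b‖ + ‖mcWeeny^[k] b - b‖ :=
          norm_sub_le_norm_sub_add_norm_sub _ _ _
      _ ≤ _ := by linarith [ih.1]

theorem exists_isIdempotentElem_norm_sub_le [CompleteSpace B] (hb : ‖b‖ ≤ M)
    (hε : 2 * ((2 * M + 3) ^ 2 + 4) * ‖b * b - b‖ ≤ 1) :
    ∃ r, IsIdempotentElem r ∧ ‖r - b‖ ≤ 2 * (2 * M + 3) * ‖b * b - b‖ := by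
  set ε := ‖b * b - b‖
  set x : ℕ → B := fun k => mcWeeny^[k] b
  have hstep (k : ℕ) : dist (x k) (x (k + 1)) ≤ (2 * M + 3) * ε * (1 / 2) ^ k := by
    have hq₁ : ((1 : ℝ) / 2) ^ k ≤ 1 := pow_le_one₀ (by norm_num) (by norm_num)
    rw [dist_comm, dist_eq_norm, mul_assoc]
    simp only [x, Function.iterate_succ_apply']
    exact (mcWeeny_step hb (norm_nonneg _) hε (by positivity) hq₁
      (mcWeeny_iterate_le hb hε k).1 (mcWeeny_iterate_le hb hε k).2).1
  obtain ⟨r, hr⟩ := cauchySeq_tendsto_of_complete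
    (cauchySeq_of_le_geometric (1 / 2) _ (by norm_num) hstep)
  have hgeom : Tendsto (fun k : ℕ => ε * (1 / 2) ^ k) atTop (𝓝 0) := by
    simpa using (tendsto_pow_atTop_nhds_zero_of_lt_one (r := (1 / 2 : ℝ))
      (by norm_num) (by norm_num)).const_mul ε
  refine ⟨r, ?_, ?_⟩
  · have hdefect : Tendsto (fun k => x k * x k - x k) atTop (𝓝 0) :=
      tendsto_zero_iff_norm_tendsto_zero.mpr <| squeeze_zero (fun _ => norm_nonneg _)
        (fun k => (mcWeeny_iterate_le hb hε k).2) hgeom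
    exact sub_eq_zero.mp (tendsto_nhds_unique ((hr.mul hr).sub hr) hdefect)
  · refine le_of_tendsto (hr.sub tendsto_const_nhds).norm (Eventually.of_forall fun k => ?_)
    have hq₀ : (0 : ℝ) ≤ (1 / 2) ^ k := by positivity
    have : ‖x k - b‖ ≤ 2 * (2 * M + 3) * ε * (1 - (1 / 2) ^ k) := (mcWeeny_iterate_le hb hε k).1
    have hC : 0 ≤ 2 * (2 * M + 3) * ε := by
      have := (norm_nonneg b).trans hb
      positivity
    nlinarith [mul_nonneg hC hq₀]

theorem exists_isIdempotentElem_tendsto [CompleteSpace B] {b : ℕ → B} (hb : IsBddSeq b)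
    (h : Tendsto (fun k => ‖b k * b k - b k‖) atTop (𝓝 0)) :
    ∃ r : ℕ → B, (∀ᶠ k in atTop, IsIdempotentElem (r k)) ∧
      Tendsto (fun k => ‖r k - b k‖) atTop (𝓝 0) := by
  obtain ⟨M, hM⟩ := hb
  set L := 2 * ((2 * M + 3) ^ 2 + 4)
  have hL : Tendsto (fun k => L * ‖b k * b k - b k‖) atTop (𝓝 0) := by
    simpa using h.const_mul L
  have hsmall : ∀ᶠ k in atTop, L * ‖b k * b k - b k‖ ≤ 1 :=
    hL.eventually (eventually_le_nhds one_pos)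
  choose r hr using fun k => (em (L * ‖b k * b k - b k‖ ≤ 1)).elim
    (fun hk => (exists_isIdempotentElem_norm_sub_le (hM k) hk).imp fun _ h _ => h)
    (fun hk => ⟨0, fun h => absurd h hk⟩)
  refine ⟨r, hsmall.mono fun k hk => (hr k hk).1, ?_⟩
  refine squeeze_zero' (Eventually.of_forall fun _ => norm_nonneg _)
    (hsmall.mono fun k hk => (hr k hk).2) ?_
  simpa using h.const_mul (2 * (2 * M + 3))

end McWeenyIteration

theorem tendsto_norm_zero_of_almost_idempotent_of_near_ideal {A : Type*} [NormedRing A]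
    [NormOneClass A] [CompleteSpace A] {P : Subring A} (hP : IsClosed (P : Set A))
    {I : TwoSidedIdeal A} (hPI : ∀ p ∈ P, p ∈ I → p = 0) {a j : ℕ → A} (ha : IsBddSeq a)
    (haP : ∀ k, a k ∈ P) (hjI : ∀ k, j k ∈ I)
    (ha_idem : Tendsto (fun k => ‖a k * a k - a k‖) atTop (𝓝 0))
    (haj : Tendsto (fun k => ‖a k - j k‖) atTop (𝓝 0)) :
    Tendsto (fun k => ‖a k‖) atTop (𝓝 0) := by
  have := hP.completeSpace_coe
  obtain ⟨r, hr_idem, hr⟩ := exists_isIdempotentElem_tendsto (b := fun k => (⟨a k, haP k⟩ : P))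
    (by simpa [IsBddSeq] using ha) (by simpa using ha_idem)
  have hrj : Tendsto (fun k => ‖(r k : A) - j k‖) atTop (𝓝 0) :=
    squeeze_zero (fun _ => norm_nonneg _) (fun k => norm_sub_le_norm_sub_add_norm_sub _ (a k) _)
      (by simpa using hr.add haj)
  have hr_zero : ∀ᶠ k in atTop, r k = 0 := by
    filter_upwards [hr_idem, hrj.eventually (eventually_lt_nhds one_pos)] with k hk hk'
    have hkI : (r k : A) ∈ I := (hk.map P.subtype).mem_of_norm_sub_lt_one (hjI k) hk'
    exact Subtype.ext (hPI _ (r k).2 hkI)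
  refine hr.congr' (hr_zero.mono fun k hk => ?_)
  simp [hk]

lemma IsQuasiBasis.eq_zero_of_forall {A : Type*} [Ring A] {E : A → A} {n : ℕ}
    {u v : Fin n → A} (hq : IsQuasiBasis E u v) {y : A} (hy : ∀ i, E (v i * y) = 0) : y = 0 := by
  rw [(hq y).1]
  exact Finset.sum_eq_zero fun i _ => by rw [hy i, mul_zero]

namespace IsCondExp

variable {A : Type*} [CStarAlgebra A] [PartialOrder A] [StarOrderedRing A]
  {P : StarSubalgebra ℂ A} {E : A → A}

def toLinearMap (hE : IsCondExp P E) : A →ₗ[ℂ] A where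
  toFun := E
  map_add' := hE.map_add
  map_smul' := hE.map_smul

lemma nonneg (hE : IsCondExp P E) {x : A} (hx : 0 ≤ x) : 0 ≤ E x := by
  obtain ⟨s, rfl⟩ := CStarAlgebra.nonneg_iff_eq_star_mul_self.mp hx
  exact hE.pos s

lemma continuous (hE : IsCondExp P E) : Continuous E :=
  map_continuous (PositiveLinearMap.mk₀ hE.toLinearMap fun _ => hE.nonneg)

lemma isClosed (hE : IsCondExp P E) : IsClosed (P : Set A) := by
  have hP : (P : Set A) = {x | E x = x} :=
    Set.ext fun x => ⟨hE.fix x, fun hx => hx ▸ hE.mem x⟩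
  exact hP ▸ isClosed_eq hE.continuous continuous_id

def mapIdeal (hE : IsCondExp P E) (I : TwoSidedIdeal A) : TwoSidedIdeal P :=
  .mk' {p | ∃ y ∈ I, E y = p} ⟨0, I.zero_mem, map_zero hE.toLinearMap⟩
    (fun ⟨y, hy, hyp⟩ ⟨z, hz, hzq⟩ => ⟨y + z, I.add_mem hy hz, by
      rw [hE.map_add, hyp, hzq, Subalgebra.coe_add]⟩)
    (fun ⟨y, hy, hyp⟩ => ⟨-y, I.neg_mem hy,
      (map_neg hE.toLinearMap y).trans (congrArg Neg.neg hyp)⟩)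
    (fun {p _} ⟨y, hy, hyq⟩ => ⟨p * y, I.mul_mem_left _ _ hy, by
      simpa [← hyq] using hE.bimod p p.2 1 (one_mem P) y⟩)
    (fun {_ q} ⟨y, hy, hyp⟩ => ⟨y * q, I.mul_mem_right _ _ hy, by
      simpa [← hyp] using hE.bimod 1 (one_mem P) q q.2 y⟩)

lemma mem_mapIdeal (hE : IsCondExp P E) {I : TwoSidedIdeal A} {p : P} :
    p ∈ hE.mapIdeal I ↔ ∃ y ∈ I, E y = p :=
  TwoSidedIdeal.mem_mk' _ _ _ _ _ _ _

lemma exists_mem_eq_one [IsSimpleRing P] (hE : IsCondExp P E) {n : ℕ} {u v : Fin n → A}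
    (hq : IsQuasiBasis E u v) {I : TwoSidedIdeal A} (hI : I ≠ ⊥) : ∃ y ∈ I, E y = 1 := by
  obtain ⟨x, hxI, hx⟩ : ∃ x ∈ I, x ≠ 0 := by
    by_contra! h
    exact hI (eq_bot_iff.mpr fun x hx => h x hx)
  obtain ⟨i, hi⟩ : ∃ i, E (v i * x) ≠ 0 := by
    by_contra! h
    exact hx (hq.eq_zero_of_forall h)
  have hmem : (⟨E (v i * x), hE.mem _⟩ : P) ∈ hE.mapIdeal I :=
    hE.mem_mapIdeal.mpr ⟨_, I.mul_mem_left _ _ hxI, rfl⟩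
  obtain ⟨y, hyI, hy⟩ := hE.mem_mapIdeal.mp
    (IsSimpleRing.one_mem_of_ne_zero_mem _ (fun h => hi (congrArg Subtype.val h)) hmem)
  exact ⟨y, hyI, hy⟩

end IsCondExp

/-- `a` is a sequence in `P` whose class `e = [a] ∈ P_∞` approximately represents `E`. -/
structure IsRepresentingSeq {A : Type*} [NormedRing A] [StarRing A] [NormedAlgebra ℂ A]
    [StarModule ℂ A] {Ainf : Type*} [Ring Ainf] [StarRing Ainf] [Algebra ℂ Ainf]
    (P : StarSubalgebra ℂ A) (E : A → A) (S : SeqAlg A Ainf) (a : ℕ → A) : Prop where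
  bdd : IsBddSeq a
  mem : ∀ k, a k ∈ P
  idem : S.q a * S.q a = S.q a
  repr : ∀ x : A, S.q a * S.incl x * S.q a = S.incl (E x) * S.q a
  inj : ∀ y ∈ P, S.incl y * S.q a = 0 → y = 0

namespace IsRepresentingSeq

section NormedAlgebra

variable {A : Type*} [NormedRing A] [StarRing A] [NormedAlgebra ℂ A] [StarModule ℂ A]
  {Ainf : Type*} [Ring Ainf] [StarRing Ainf] [Algebra ℂ Ainf]
  {P : StarSubalgebra ℂ A} {E : A → A} {S : SeqAlg A Ainf} {a : ℕ → A}

lemma incl_mul_comm (h : IsRepresentingSeq P E S a) {x : A} (hx : ∀ p ∈ P, Commute x p) :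
    S.incl x * S.q a = S.q a * S.incl x := by
  rw [S.incl_mul_q x h.bdd, S.q_mul_incl h.bdd x]
  exact congrArg S.q (funext fun k => (hx _ (h.mem k)).eq)

lemma tendsto_mul_mul_sub (h : IsRepresentingSeq P E S a) (x : A) :
    Tendsto (fun k => ‖a k * x * a k - E x * a k‖) atTop (𝓝 0) := by
  have hax : IsBddSeq fun k => a k * x := h.bdd.mul (.const x)
  refine S.tendsto_norm_sub_of_q_eq (hax.mul h.bdd) ((IsBddSeq.const _).mul h.bdd) ?_
  calc (S.q fun k => a k * x * a k) = S.q a * S.incl x * S.q a := by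
        rw [S.q_mul' hax h.bdd, S.q_mul_incl h.bdd]
    _ = S.incl (E x) * S.q a := h.repr x
    _ = S.q fun k => E x * a k := S.incl_mul_q _ h.bdd

lemma tendsto_mul_self_sub (h : IsRepresentingSeq P E S a) :
    Tendsto (fun k => ‖a k * a k - a k‖) atTop (𝓝 0) :=
  S.tendsto_norm_sub_of_q_eq (h.bdd.mul h.bdd) h.bdd (by rw [S.q_mul' h.bdd h.bdd, h.idem])

lemma not_tendsto_norm_zero [Nontrivial A] (h : IsRepresentingSeq P E S a) :
    ¬ Tendsto (fun k => ‖a k‖) atTop (𝓝 0) := fun h0 =>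
  one_ne_zero <| h.inj 1 (one_mem P) <| by
    rw [(S.q_eq_zero_iff a h.bdd).mpr h0, mul_zero]

end NormedAlgebra

variable {A : Type*} [CStarAlgebra A] [PartialOrder A] [StarOrderedRing A]
  {Ainf : Type*} [Ring Ainf] [StarRing Ainf] [Algebra ℂ Ainf]
  {P : StarSubalgebra ℂ A} {E : A → A} {S : SeqAlg A Ainf} {a : ℕ → A}
  {n : ℕ} {u v : Fin n → A}

lemma eq_zero_of_incl_mul_eq_zero (h : IsRepresentingSeq P E S a) (hE : IsCondExp P E)
    (hq : IsQuasiBasis E u v) {y : A} (hy : S.incl y * S.q a = 0) : y = 0 := by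
  refine hq.eq_zero_of_forall fun i => h.inj _ (hE.mem _) ?_
  rw [← h.repr, S.incl_mul, mul_assoc, mul_assoc, hy, mul_zero, mul_zero]

lemma mem_of_forall_commute (h : IsRepresentingSeq P E S a) (hE : IsCondExp P E)
    (hq : IsQuasiBasis E u v) {x : A} (hx : ∀ p ∈ P, Commute x p) : x ∈ P := by
  have hxe : S.incl x * S.q a = S.incl (E x) * S.q a := by
    rw [← h.repr, ← h.incl_mul_comm hx, mul_assoc, h.idem]
  have hx_eq : x - E x = 0 :=
    h.eq_zero_of_incl_mul_eq_zero hE hq (by rw [S.incl_sub, sub_mul, hxe, sub_self])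
  exact sub_eq_zero.mp hx_eq ▸ hE.mem x

theorem exists_eq_smul_one_of_forall_commute [IsSimpleRing P] (h : IsRepresentingSeq P E S a)
    (hE : IsCondExp P E) (hq : IsQuasiBasis E u v) {x : A} (hx : ∀ p ∈ P, Commute x p) :
    ∃ c : ℂ, x = c • (1 : A) := by
  have := hE.isClosed.completeSpace_coe
  obtain ⟨c, hc⟩ := IsSimpleRing.exists_eq_smul_one_of_forall_commute
    (x := (⟨x, h.mem_of_forall_commute hE hq hx⟩ : P)) fun y => Subtype.ext (hx y y.2).eq
  exact ⟨c, congrArg Subtype.val hc⟩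

theorem isSimpleRing [Nontrivial A] [IsSimpleRing P] (h : IsRepresentingSeq P E S a)
    (hE : IsCondExp P E) (hq : IsQuasiBasis E u v) : IsSimpleRing A := by
  refine .of_eq_bot_or_eq_top fun I => or_iff_not_imp_left.mpr fun hI => ?_
  obtain ⟨i, hiI, hEi⟩ := hE.exists_mem_eq_one hq hI
  by_contra hI_top
  have hPI : ∀ p ∈ P, p ∈ I → p = 0 := fun p hp hpI => by
    by_contra hp0
    have hmem : (⟨p, hp⟩ : P) ∈ I.comap P.subtype := (TwoSidedIdeal.mem_comap _).mpr hpI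
    exact hI_top <| I.one_mem_iff.mp <| (TwoSidedIdeal.mem_comap _).mp
      (IsSimpleRing.one_mem_of_ne_zero_mem _ (fun h => hp0 (congrArg Subtype.val h)) hmem)
  refine h.not_tendsto_norm_zero <| tendsto_norm_zero_of_almost_idempotent_of_near_ideal
    (P := P.toSubalgebra.toSubring) hE.isClosed hPI h.bdd h.mem
    (j := fun k => a k * i * a k) (fun k => I.mul_mem_right _ _ (I.mul_mem_left _ _ hiI))
    h.tendsto_mul_self_sub ?_
  simpa [hEi, norm_sub_rev] using h.tendsto_mul_mul_sub i

end IsRepresentingSeq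

theorem approx_representable_simple_base_implies_irreducible_and_simple_general
    {A : Type*} [NormedRing A] [StarRing A] [CStarRing A] [NormedAlgebra ℂ A]
    [CompleteSpace A] [StarModule ℂ A] [PartialOrder A] [StarOrderedRing A]
    (P : StarSubalgebra ℂ A) (E : A → A) (hE : IsCondExp P E)
    {n : ℕ} (u v : Fin n → A) (hq : IsQuasiBasis E u v)
    {Ainf : Type*} [Ring Ainf] [StarRing Ainf] [Algebra ℂ Ainf] (S : SeqAlg A Ainf)
    -- the projection `e ∈ P_∞` approximately representing `E`
    (e : Ainf) (he_rep : ∃ a : ℕ → A, IsBddSeq a ∧ (∀ n, a n ∈ P) ∧ S.q a = e)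
    (he_idem : e * e = e)
    (he_repE : ∀ x : A, e * S.incl x * e = S.incl (E x) * e)
    (he_inj : ∀ y ∈ P, S.incl y * e = 0 → y = 0)
    -- `P` is simple
    (hPsimple : IsSimpleCStarAlgebra ↥P) :
    (∀ x : A, (∀ p ∈ P, Commute x p) → ∃ c : ℂ, x = c • (1 : A)) ∧
      IsSimpleCStarAlgebra A := by
  rcases subsingleton_or_nontrivial A with hA | hA
  · exact ⟨fun x _ => ⟨0, Subsingleton.elim _ _⟩, fun I _ =>
      .inl (eq_bot_iff.mpr fun x _ => (TwoSidedIdeal.mem_bot _).mpr (Subsingleton.elim x 0))⟩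
  let : CStarAlgebra A := { }
  obtain ⟨a, ha, haP, rfl⟩ := he_rep
  have h : IsRepresentingSeq P E S a := ⟨ha, haP, he_idem, he_repE, he_inj⟩
  have := hE.isClosed.completeSpace_coe
  have : IsSimpleRing P := isSimpleCStarAlgebra_iff_isSimpleRing.mp hPsimple
  exact ⟨fun x hx => h.exists_eq_smul_one_of_forall_commute hE hq hx,
    isSimpleCStarAlgebra_iff_isSimpleRing.mpr (h.isSimpleRing hE hq)⟩

/-- if a finite-index conditional expectation `E : A → P` is
approximately representable and `P` is simple, then the inclusion `P ⊆ A` is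
irreducible (`P' ∩ A ≅ ℂ`) and `A` is simple. -/
theorem approx_representable_simple_base_implies_irreducible_and_simple
    {A : Type*} [NormedRing A] [StarRing A] [CStarRing A] [NormedAlgebra ℂ A]
    [CompleteSpace A] [StarModule ℂ A] [PartialOrder A] [StarOrderedRing A]
    (P : StarSubalgebra ℂ A) (E : A → A) (hE : IsCondExp P E)
    {n : ℕ} (u v : Fin n → A) (hq : IsQuasiBasis E u v)
    {Ainf : Type*} [Ring Ainf] [StarRing Ainf] [Algebra ℂ Ainf] (S : SeqAlg A Ainf)
    -- the projection `e ∈ P_∞` approximately representing `E`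
    (e : Ainf) (he_rep : ∃ a : ℕ → A, IsBddSeq a ∧ (∀ n, a n ∈ P) ∧ S.q a = e)
    (he_idem : e * e = e) (he_star : star e = e)
    (he_comm : ∀ p ∈ P, Commute e (S.incl p))
    (he_repE : ∀ x : A, e * S.incl x * e = S.incl (E x) * e)
    (he_inj : ∀ y ∈ P, S.incl y * e = 0 → y = 0)
    -- `P` is simple
    (hPsimple : IsSimpleCStarAlgebra ↥P) :
    (∀ x : A, (∀ p ∈ P, Commute x p) → ∃ c : ℂ, x = c • (1 : A)) ∧
      IsSimpleCStarAlgebra A :=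
  approx_representable_simple_base_implies_irreducible_and_simple_general P E hE u v hq S e he_rep
    he_idem he_repE he_inj hPsimple
end
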